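/- Let s ∈ Ṡ and let u be a periodic sequence of integers such that σ^k(u) ∉ {K⁺(s), K⁻(s)} for all k ≥ 1. Then there exists a periodic external address r with itin_s(r) = u, and moreover every address r ∈ S̄ with itin_s(r) = u is a periodic external address. -/

import Mathlib

noncomputable section

/-- Entries of an address: a real number or `∞`. -/
abbrev Entry : Type := WithTop ℝ

/-- An address is a sequence of entries. -/
abbrev Addr : Type := ℕ → Entry

/-- The address `∞` (all of whose entries are infinite). -/
def topAddr : Addr := fun _ => ⊤

/-- The shift map `σ`, deleting the first entry. -/
def shift (a : Addr) : Addr := fun k => a (k + 1)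

/-- The iterated shift `σ^k`. -/
def shiftIter (a : Addr) (k : ℕ) : Addr := fun j => a (j + k)

/-- `σ^k(a)` is defined (all earlier iterates differ from `∞`). -/
def shiftDef (a : Addr) (k : ℕ) : Prop := ∀ j, j < k → shiftIter a j ≠ topAddr

/-- Prepending an entry to an address. -/
def consAddr (x : Entry) (a : Addr) : Addr := fun k => if k = 0 then x else a (k - 1)

/-- The lexicographic (strict) order on addresses. -/
def addrLt (a b : Addr) : Prop := ∃ k, (∀ j, j < k → a j = b j) ∧ a k < b k

/-- The lexicographic order on addresses. -/
def addrLe (a b : Addr) : Prop := addrLt a b ∨ a = b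

/-- Infinite external addresses: all entries are integers. -/
def IsExtAddr (a : Addr) : Prop := ∀ k, ∃ m : ℤ, a k = ((m : ℝ) : Entry)

/-- Intermediate external addresses of length `n ≥ 1`: the first `n - 2` entries are
integers, the `(n-1)`-st entry lies in `ℤ + 1/2`, and all further entries are `∞`
(for `n = 1` this is the address `∞` itself). -/
def IsIntermediate (a : Addr) (n : ℕ) : Prop :=
  1 ≤ n ∧ (∀ k, k + 2 < n → ∃ m : ℤ, a k = ((m : ℝ) : Entry)) ∧
    (∀ k, k + 2 = n → ∃ m : ℤ, a k = (((m : ℝ) + 1 / 2 : ℝ) : Entry)) ∧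
    (∀ k, n ≤ k + 1 → a k = ⊤)

/-- Membership in `Ṡ`: infinite external addresses and intermediate ones of length `≥ 2`. -/
def InSDot (a : Addr) : Prop := IsExtAddr a ∨ ∃ n, 2 ≤ n ∧ IsIntermediate a n

/-- Membership in `S̄ = Ṡ ∪ {∞}`. -/
def InSBar (a : Addr) : Prop := InSDot a ∨ a = topAddr

/-- `a` is periodic of (exact) period `n`. -/
def PeriodicAddr (a : Addr) (n : ℕ) : Prop :=
  1 ≤ n ∧ shiftIter a n = a ∧ ∀ m, 1 ≤ m → m < n → shiftIter a m ≠ a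

/-- Itinerary entries: integers `j`, boundary symbols `[j/(j-1)]` (encoded `bdy j`),
or the symbol `*`. -/
inductive ItinEntry : Type
  | int : ℤ → ItinEntry
  | bdy : ℤ → ItinEntry
  | star : ItinEntry
  deriving DecidableEq

open scoped Classical in
/-- The itinerary `itin_s(r)`; position `k` holds the entry `u_{k+1}` of the paper:
`u_{k+1} = j` if `js < σ^k(r) < (j+1)s`, the boundary symbol `[j/(j-1)]` if `σ^k(r) = js`,
and `*` if `σ^k(r) = ∞`. -/
def itin (s r : Addr) : ℕ → ItinEntry := fun k =>
  if shiftIter r k = topAddr then ItinEntry.star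
  else if h : ∃ j : ℤ, shiftIter r k = consAddr ((j : ℝ) : Entry) s then ItinEntry.bdy h.choose
  else if h : ∃ j : ℤ, addrLt (consAddr ((j : ℝ) : Entry) s) (shiftIter r k) ∧
      addrLt (shiftIter r k) (consAddr (((j + 1 : ℤ) : ℝ) : Entry) s) then ItinEntry.int h.choose
  else ItinEntry.star

/-- Replace each boundary symbol `[j/(j-1)]` by `j`. -/
def entryPlus : ItinEntry → ItinEntry
  | ItinEntry.bdy j => ItinEntry.int j
  | e => e

/-- Replace each boundary symbol `[j/(j-1)]` by `j - 1`. -/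
def entryMinus : ItinEntry → ItinEntry
  | ItinEntry.bdy j => ItinEntry.int (j - 1)
  | e => e

/-- The itinerary `itin⁺_s(r)`. -/
def itinPlus (s r : Addr) : ℕ → ItinEntry := fun k => entryPlus (itin s r k)

/-- The itinerary `itin⁻_s(r)`. -/
def itinMinus (s r : Addr) : ℕ → ItinEntry := fun k => entryMinus (itin s r k)

/-- The periodic itinerary `(u_1 … u_n)^∞` (with `u_i` encoded as `u (i - 1)`). -/
def perItin (u : ℕ → ℤ) (n : ℕ) : ℕ → ItinEntry := fun k => ItinEntry.int (u (k % n))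

/-- The finite itinerary word `u_1 … u_{n-1} *` (star from position `n - 1` onwards). -/
def finWord (u : ℕ → ℤ) (n : ℕ) : ℕ → ItinEntry := fun k =>
  if k + 1 < n then ItinEntry.int (u k) else ItinEntry.star

/-- A combinatorial characteristic ray pair of period `n` with itinerary `(u_1 … u_n)^∞`. -/
def CharRayPair (rm rp : Addr) (n : ℕ) (u : ℕ → ℤ) : Prop :=
  IsExtAddr rm ∧ IsExtAddr rp ∧ PeriodicAddr rm n ∧ PeriodicAddr rp n ∧ addrLt rm rp ∧
    (∀ k, 1 ≤ k → ¬(addrLt rm (shiftIter rm k) ∧ addrLt (shiftIter rm k) rp)) ∧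
    (∀ k, 1 ≤ k → ¬(addrLt rm (shiftIter rp k) ∧ addrLt (shiftIter rp k) rp)) ∧
    itinMinus rm rm = perItin u n ∧ itinMinus rm rp = perItin u n ∧
    addrLt (shiftIter rp (n - 1)) (shiftIter rm (n - 1))

/-!
Write `u = (int v_k)`. An integer address `γ` has itinerary `u` exactly when every `γ_k` is `v_k`
or `v_k + 1` according as `σ^{k+1} γ` lies above or below `s`.

If `s` could be approximated to every depth by integer addresses whose itinerary⁺ follows a
shift `w` of `u`, then `s` itself would have `K⁺(s) = w` or `K⁻(s) = w`. Since `u` is periodic,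
the hypothesis therefore gives one depth `N` within which every solution for a shift of `u`
leaves `s`. For a solution `γ`, the comparison of `σ^{k+1} γ` with `s` is then read off
`γ_{k+1}, …, γ_{k+N}`, so `γ_k` is determined by those entries and by `k mod p`: a finite-state
system that can be run backwards, hence periodic.

For existence, solve backwards from depth `D` and take a cluster point of these approximations in
the compact box `∏ [v_k, v_k + 1]`. A tail of the limit equal to `s` would again approximate `s`
to every depth, so no tail hits `s` and the limit has itinerary exactly `u`.
-/

theorem exists_periodic_of_determines_pred {α : Type*} [Finite α] (f : ℕ → α)
    (h : ∀ k k', f (k + 1) = f (k' + 1) → f k = f k') :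
    ∃ d, 0 < d ∧ Function.Periodic f d := by
  classical
  -- `g` sends `f (k + 1)` to `f k`; two equal iterates `g^[m] = g^[m']` give the period `m' - m`.
  let g : α → α := fun x => if hx : ∃ k, f (k + 1) = x then f hx.choose else x
  have hg : ∀ k, g (f (k + 1)) = f k := fun k => by
    have hx : ∃ j, f (j + 1) = f (k + 1) := ⟨k, rfl⟩
    simp only [g, dif_pos hx]
    exact h _ _ hx.choose_spec
  have hiter : ∀ n k, g^[n] (f (k + n)) = f k := by
    intro n
    induction n with
    | zero => exact fun k => rfl
    | succ n ih => intro k; rw [Function.iterate_succ_apply, ← add_assoc, hg, ih]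
  obtain ⟨m, m', hne, heq⟩ := Finite.exists_ne_map_eq_of_infinite fun n => g^[n]
  wlog hlt : m < m' generalizing m m'
  · exact this m' m hne.symm heq.symm (by omega)
  refine ⟨m' - m, by omega, fun k => ?_⟩
  calc f (k + (m' - m)) = g^[m] (f (k + m')) := by
        rw [← hiter m, show k + (m' - m) + m = k + m' by omega]
    _ = f k := by rw [show g^[m] = g^[m'] from heq, hiter]

def intAddr (γ : ℕ → ℤ) : Addr := fun k => ((γ k : ℝ) : Entry)

lemma intAddr_apply_inj {γ γ' : ℕ → ℤ} {j : ℕ} :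
    intAddr γ j = intAddr γ' j ↔ γ j = γ' j := by
  simp [intAddr]

lemma shiftIter_shiftIter (a : Addr) (m k : ℕ) :
    shiftIter (shiftIter a m) k = shiftIter a (k + m) := by
  funext j; simp only [shiftIter, add_assoc]

lemma shiftIter_intAddr (γ : ℕ → ℤ) (m : ℕ) :
    shiftIter (intAddr γ) m = intAddr (fun j => γ (j + m)) := rfl

lemma shiftIter_eq_consAddr (a : Addr) (k : ℕ) :
    shiftIter a k = consAddr (a k) (shiftIter a (k + 1)) := by
  funext j
  cases j <;> simp [shiftIter, consAddr, add_comm, add_left_comm]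

lemma consAddr_injective_right {x y : Entry} {t t' : Addr} (h : consAddr x t = consAddr y t') :
    t = t' := by
  funext j; simpa [consAddr] using congrFun h (j + 1)

lemma addrLt_irrefl (a : Addr) : ¬ addrLt a a := lt_irrefl (toLex a)

lemma addrLt_asymm {a b : Addr} (h : addrLt a b) : ¬ addrLt b a :=
  lt_asymm (a := toLex a) (b := toLex b) h

lemma addrLt_trans {a b c : Addr} (h₁ : addrLt a b) (h₂ : addrLt b c) : addrLt a c :=
  lt_trans (a := toLex a) (b := toLex b) (c := toLex c) h₁ h₂

lemma addrLt_trichotomy (a b : Addr) : addrLt a b ∨ a = b ∨ addrLt b a := by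
  have := lt_trichotomy (toLex a) (toLex b)
  rwa [toLex_inj] at this

lemma addrLt_iff_of_eqOn {a b : Addr} {d : ℕ} (hpre : ∀ j < d, a j = b j) (hd : a d ≠ b d) :
    addrLt a b ↔ a d < b d := by
  refine ⟨fun ⟨k, hk, hlt⟩ => ?_, fun h => ⟨d, hpre, h⟩⟩
  rcases lt_trichotomy k d with hkd | rfl | hdk
  · exact absurd (hpre k hkd) hlt.ne
  · exact hlt
  · exact absurd (hk d hdk) hd

lemma exists_first_ne {a b : Addr} {n : ℕ} (h : ∃ j < n, a j ≠ b j) :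
    ∃ d < n, (∀ j < d, a j = b j) ∧ a d ≠ b d := by
  classical
  have hex : ∃ j, a j ≠ b j := h.imp fun _ => And.right
  obtain ⟨j, hjn, hj⟩ := h
  exact ⟨Nat.find hex, (Nat.find_min' hex hj).trans_lt hjn,
    fun i hi => not_not.1 (Nat.find_min hex hi), Nat.find_spec hex⟩

lemma addrLt_congr_left {x y s : Addr} {n : ℕ} (hxy : ∀ j < n, x j = y j)
    (hx : ∃ j < n, x j ≠ s j) : addrLt x s ↔ addrLt y s := by
  obtain ⟨d, hdn, hpre, hd⟩ := exists_first_ne hx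
  have hyx : ∀ j ≤ d, y j = x j := fun j hj => (hxy j (by omega)).symm
  rw [addrLt_iff_of_eqOn hpre hd,
    addrLt_iff_of_eqOn (fun j hj => (hyx j hj.le).trans (hpre j hj)) (by rwa [hyx d le_rfl]),
    hyx d le_rfl]

lemma addrLt_congr_right {x y s : Addr} {n : ℕ} (hxy : ∀ j < n, x j = y j)
    (hx : ∃ j < n, x j ≠ s j) : addrLt s x ↔ addrLt s y := by
  obtain ⟨d, hdn, hpre, hd⟩ := exists_first_ne hx
  have hyx : ∀ j ≤ d, y j = x j := fun j hj => (hxy j (by omega)).symm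
  rw [addrLt_iff_of_eqOn (fun j hj => (hpre j hj).symm) (Ne.symm hd),
    addrLt_iff_of_eqOn (fun j hj => ((hyx j hj.le).trans (hpre j hj)).symm)
      (by rw [hyx d le_rfl]; exact Ne.symm hd), hyx d le_rfl]

lemma consAddr_lt_consAddr_iff {x y : Entry} {t t' : Addr} :
    addrLt (consAddr x t) (consAddr y t') ↔ x < y ∨ x = y ∧ addrLt t t' := by
  constructor
  · rintro ⟨_ | k, hk, hlt⟩
    · exact Or.inl hlt
    · refine Or.inr ⟨hk 0 k.succ_pos, k, fun j hj => ?_, hlt⟩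
      simpa [consAddr] using hk (j + 1) (by omega)
  · rintro (h | ⟨rfl, k, hk, hlt⟩)
    · exact ⟨0, by simp, h⟩
    · refine ⟨k + 1, fun j hj => ?_, hlt⟩
      cases j with
      | zero => rfl
      | succ j => simpa [consAddr] using hk j (by omega)

lemma intCons_lt_intCons_iff {i j : ℤ} {t : Addr} :
    addrLt (consAddr ((i : ℝ) : Entry) t) (consAddr ((j : ℝ) : Entry) t) ↔ i < j := by
  rw [consAddr_lt_consAddr_iff]
  simp [addrLt_irrefl]

lemma shiftIter_intAddr_ne_topAddr (γ : ℕ → ℤ) (k : ℕ) :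
    shiftIter (intAddr γ) k ≠ topAddr :=
  fun h => WithTop.coe_ne_top (congrFun h 0)

@[simp] lemma entryPlus_int (j : ℤ) : entryPlus (.int j) = .int j := rfl
@[simp] lemma entryPlus_bdy (j : ℤ) : entryPlus (.bdy j) = .int j := rfl
@[simp] lemma entryMinus_int (j : ℤ) : entryMinus (.int j) = .int j := rfl
@[simp] lemma entryMinus_bdy (j : ℤ) : entryMinus (.bdy j) = .int (j - 1) := rfl

lemma itin_eq_int {s r : Addr} {k : ℕ} {j : ℤ} (htop : shiftIter r k ≠ topAddr)
    (hbdy : ∀ i : ℤ, shiftIter r k ≠ consAddr ((i : ℝ) : Entry) s)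
    (hlo : addrLt (consAddr ((j : ℝ) : Entry) s) (shiftIter r k))
    (hhi : addrLt (shiftIter r k) (consAddr (((j + 1 : ℤ) : ℝ) : Entry) s)) :
    itin s r k = .int j := by
  have hex : ∃ i : ℤ, addrLt (consAddr ((i : ℝ) : Entry) s) (shiftIter r k) ∧
      addrLt (shiftIter r k) (consAddr (((i + 1 : ℤ) : ℝ) : Entry) s) := ⟨j, hlo, hhi⟩
  rw [itin, if_neg htop, dif_neg (not_exists.2 hbdy), dif_pos hex]
  obtain ⟨hlo', hhi'⟩ := hex.choose_spec
  have h₁ := intCons_lt_intCons_iff.1 (addrLt_trans hlo hhi')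
  have h₂ := intCons_lt_intCons_iff.1 (addrLt_trans hlo' hhi)
  congr 1
  omega

lemma intAddr_apply_lt_succ (γ : ℕ → ℤ) (k : ℕ) :
    intAddr γ k < (((γ k + 1 : ℤ) : ℝ) : Entry) :=
  WithTop.coe_lt_coe.2 (by exact_mod_cast lt_add_one (γ k))

lemma itin_intAddr_of_lt {s : Addr} {γ : ℕ → ℤ} {k : ℕ}
    (h : addrLt s (shiftIter (intAddr γ) (k + 1))) : itin s (intAddr γ) k = .int (γ k) := by
  have hcons := shiftIter_eq_consAddr (intAddr γ) k
  refine itin_eq_int (shiftIter_intAddr_ne_topAddr γ k) (fun i hi => ?_) ?_ ?_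
  · rw [hcons] at hi
    exact addrLt_irrefl s (consAddr_injective_right hi ▸ h)
  · exact hcons ▸ consAddr_lt_consAddr_iff.2 (Or.inr ⟨rfl, h⟩)
  · exact hcons ▸ consAddr_lt_consAddr_iff.2 (Or.inl (intAddr_apply_lt_succ γ k))

lemma itin_intAddr_of_gt {s : Addr} {γ : ℕ → ℤ} {k : ℕ}
    (h : addrLt (shiftIter (intAddr γ) (k + 1)) s) : itin s (intAddr γ) k = .int (γ k - 1) := by
  have hcons := shiftIter_eq_consAddr (intAddr γ) k
  refine itin_eq_int (shiftIter_intAddr_ne_topAddr γ k) (fun i hi => ?_) ?_ ?_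
  · rw [hcons] at hi
    exact addrLt_irrefl s (consAddr_injective_right hi ▸ h)
  · exact hcons ▸ consAddr_lt_consAddr_iff.2
      (Or.inl (WithTop.coe_lt_coe.2 (by exact_mod_cast sub_one_lt (γ k))))
  · exact hcons ▸ consAddr_lt_consAddr_iff.2 (Or.inr ⟨by simp [intAddr], h⟩)

lemma itin_intAddr_of_eq {s : Addr} {γ : ℕ → ℤ} {k : ℕ}
    (h : shiftIter (intAddr γ) (k + 1) = s) : itin s (intAddr γ) k = .bdy (γ k) := by
  have hex : ∃ i : ℤ, shiftIter (intAddr γ) k = consAddr ((i : ℝ) : Entry) s :=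
    ⟨γ k, h ▸ shiftIter_eq_consAddr (intAddr γ) k⟩
  rw [itin, if_neg (shiftIter_intAddr_ne_topAddr γ k), dif_pos hex]
  have h0 := congrFun hex.choose_spec 0
  simp only [shiftIter, consAddr, intAddr, zero_add, if_true] at h0
  exact congrArg ItinEntry.bdy (by exact_mod_cast h0.symm)

lemma itin_intAddr_eq_int_iff {s : Addr} {γ : ℕ → ℤ} {k : ℕ} {j : ℤ} :
    itin s (intAddr γ) k = .int j ↔
      (γ k = j ∧ addrLt s (shiftIter (intAddr γ) (k + 1))) ∨
        (γ k = j + 1 ∧ addrLt (shiftIter (intAddr γ) (k + 1)) s) := by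
  rcases addrLt_trichotomy s (shiftIter (intAddr γ) (k + 1)) with h | h | h
  · simp [itin_intAddr_of_lt h, addrLt_asymm h, h]
  · simp [itin_intAddr_of_eq h.symm, ← h, addrLt_irrefl]
  · simp [itin_intAddr_of_gt h, addrLt_asymm h, h]
    omega

lemma itinPlus_intAddr_eq_int_iff {s : Addr} {γ : ℕ → ℤ} {k : ℕ} {j : ℤ} :
    itinPlus s (intAddr γ) k = .int j ↔
      (γ k = j ∧ ¬ addrLt (shiftIter (intAddr γ) (k + 1)) s) ∨
        (γ k = j + 1 ∧ addrLt (shiftIter (intAddr γ) (k + 1)) s) := by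
  rcases addrLt_trichotomy s (shiftIter (intAddr γ) (k + 1)) with h | h | h
  · simp [itinPlus, itin_intAddr_of_lt h, addrLt_asymm h]
  · simp [itinPlus, itin_intAddr_of_eq h.symm, ← h, addrLt_irrefl]
  · simp [itinPlus, itin_intAddr_of_gt h, h]
    omega

lemma itin_shiftIter (s r : Addr) (c k : ℕ) : itin s (shiftIter r c) k = itin s r (k + c) := by
  rw [itin, itin, shiftIter_shiftIter]

lemma itinPlus_shiftIter (s r : Addr) (c k : ℕ) :
    itinPlus s (shiftIter r c) k = itinPlus s r (k + c) := by
  rw [itinPlus, itinPlus, itin_shiftIter]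

lemma exists_forall_eqOn_itinPlus_eq_itin {s : Addr} {γ : ℕ → ℤ} {k : ℕ}
    (hne : shiftIter (intAddr γ) (k + 1) ≠ s) :
    ∃ n, ∀ γ' : ℕ → ℤ, (∀ j < n, γ' j = γ j) →
      itinPlus s (intAddr γ') k = itin s (intAddr γ) k := by
  obtain ⟨e, he⟩ : ∃ e, shiftIter (intAddr γ) (k + 1) e ≠ s e := by
    by_contra! h
    exact hne (funext h)
  refine ⟨e + k + 2, fun γ' hγ' => ?_⟩
  have htail : ∀ j < e + 1,
      shiftIter (intAddr γ) (k + 1) j = shiftIter (intAddr γ') (k + 1) j :=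
    fun j hj => intAddr_apply_inj.2 (hγ' _ (by omega)).symm
  have hdiff : ∃ j < e + 1, shiftIter (intAddr γ) (k + 1) j ≠ s j := ⟨e, by omega, he⟩
  rcases addrLt_trichotomy s (shiftIter (intAddr γ) (k + 1)) with h | h | h
  · rw [itinPlus, itin_intAddr_of_lt h,
      itin_intAddr_of_lt ((addrLt_congr_right htail hdiff).1 h), hγ' k (by omega), entryPlus_int]
  · exact absurd h.symm hne
  · rw [itinPlus, itin_intAddr_of_gt h,
      itin_intAddr_of_gt ((addrLt_congr_left htail hdiff).1 h), hγ' k (by omega), entryPlus_int]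

lemma shiftIter_lt_iff_of_shiftIter_eq {x s : Addr} {m d : ℕ} (hs : shiftIter s m = s)
    (hmd : m ≤ d) (hpre : ∀ j < d, x j = s j) (hd : x d ≠ s d) :
    addrLt (shiftIter x m) s ↔ x d < s d := by
  have hs' : ∀ j, s (j + m) = s j := congrFun hs
  have hsd : s (d - m) = s d := by rw [← hs' (d - m), Nat.sub_add_cancel hmd]
  have hxd : shiftIter x m (d - m) = x d := by rw [shiftIter, Nat.sub_add_cancel hmd]
  have hne : shiftIter x m (d - m) ≠ s (d - m) := by rwa [hxd, hsd]
  rw [addrLt_iff_of_eqOn (a := shiftIter x m) (fun j hj => (hpre _ (by omega)).trans (hs' j)) hne,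
    hxd, hsd]

def ItinPlusApprox (s : Addr) (w : ℕ → ℤ) (F : ℕ) : Prop :=
  ∃ γ : ℕ → ℤ, (∀ j < F, intAddr γ j = s j) ∧
    ∀ i < F, itinPlus s (intAddr γ) i = .int (w i)

lemma ItinPlusApprox.mono {s : Addr} {w : ℕ → ℤ} {F F' : ℕ} (hF : F ≤ F')
    (h : ItinPlusApprox s w F') : ItinPlusApprox s w F :=
  let ⟨γ, hγ, hrel⟩ := h
  ⟨γ, fun j hj => hγ j (by omega), fun i hi => hrel i (by omega)⟩

section Kneading

variable {w : ℕ → ℤ}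

lemma exists_eq_intAddr_of_forall_itinPlusApprox {s : Addr} (h : ∀ F, ItinPlusApprox s w F) :
    ∃ a, s = intAddr a := by
  choose γ hγ _ using h
  exact ⟨fun k => γ (k + 1) k, funext fun k => (hγ (k + 1) k (by omega)).symm⟩

variable {a : ℕ → ℤ} (h : ∀ F, ItinPlusApprox (intAddr a) w F)
include h

lemma itin_self_of_shiftIter_ne {k : ℕ} (hk : shiftIter (intAddr a) (k + 1) ≠ intAddr a) :
    itin (intAddr a) (intAddr a) k = .int (w k) := by
  obtain ⟨n, hn⟩ := exists_forall_eqOn_itinPlus_eq_itin hk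
  obtain ⟨γ, hγ, hrel⟩ := h (max n (k + 1))
  rw [← hn γ fun j hj => intAddr_apply_inj.1 (hγ j (by omega))]
  exact hrel k (by omega)

lemma eq_or_eq_add_one (k : ℕ) : a k = w k ∨ a k = w k + 1 := by
  obtain ⟨γ, hγ, hrel⟩ := h (k + 1)
  rw [← intAddr_apply_inj.1 (hγ k (by omega))]
  rcases itinPlus_intAddr_eq_int_iff.1 (hrel k (by omega)) with ⟨he, -⟩ | ⟨he, -⟩
  exacts [Or.inl he, Or.inr he]

lemma eq_add_one_of_shiftIter_eq_of_eq_add_one {i i' : ℕ}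
    (hi : shiftIter (intAddr a) (i + 1) = intAddr a)
    (hi' : shiftIter (intAddr a) (i' + 1) = intAddr a) (hai' : a i' = w i' + 1) :
    a i = w i + 1 := by
  refine (eq_or_eq_add_one h i).resolve_left fun hai => ?_
  obtain ⟨γ, hγ, hrel⟩ := h (max i i' + 1)
  have hγa : ∀ j < max i i' + 1, γ j = a j := fun j hj => intAddr_apply_inj.1 (hγ j hj)
  have hlt' : addrLt (shiftIter (intAddr γ) (i' + 1)) (intAddr a) := by
    rcases itinPlus_intAddr_eq_int_iff.1 (hrel i' (by omega)) with ⟨he, -⟩ | ⟨-, hlt⟩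
    · have := hγa i' (by omega)
      omega
    · exact hlt
  have hnlt : ¬ addrLt (shiftIter (intAddr γ) (i + 1)) (intAddr a) := by
    rcases itinPlus_intAddr_eq_int_iff.1 (hrel i (by omega)) with ⟨-, hnlt⟩ | ⟨he, -⟩
    · exact hnlt
    · have := hγa i (by omega)
      omega
  obtain ⟨j, hj⟩ : ∃ j, intAddr γ j ≠ intAddr a j := by
    by_contra! hall
    rw [funext hall, hi'] at hlt'
    exact addrLt_irrefl _ hlt'
  obtain ⟨d, -, hpre, hd⟩ := exists_first_ne ⟨j, j.lt_succ_self, hj⟩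
  have hFd : max i i' + 1 ≤ d := by
    by_contra! hlt
    exact hd (intAddr_apply_inj.2 (hγa d hlt))
  -- `intAddr a` is fixed by both shifts, so both comparisons are decided where `γ` leaves it.
  rw [shiftIter_lt_iff_of_shiftIter_eq hi (by omega) hpre hd] at hnlt
  rw [shiftIter_lt_iff_of_shiftIter_eq hi' (by omega) hpre hd] at hlt'
  exact hnlt hlt'

end Kneading

theorem itinPlus_or_itinMinus_self_eq_of_forall_itinPlusApprox {s : Addr} {w : ℕ → ℤ}
    (h : ∀ F, ItinPlusApprox s w F) :
    itinPlus s s = (fun k => .int (w k)) ∨ itinMinus s s = (fun k => .int (w k)) := by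
  obtain ⟨a, rfl⟩ := exists_eq_intAddr_of_forall_itinPlusApprox h
  by_cases hplus : ∀ k, shiftIter (intAddr a) (k + 1) = intAddr a → a k = w k
  · left
    funext k
    by_cases hk : shiftIter (intAddr a) (k + 1) = intAddr a
    · rw [itinPlus, itin_intAddr_of_eq hk, entryPlus_bdy, hplus k hk]
    · rw [itinPlus, itin_self_of_shiftIter_ne h hk, entryPlus_int]
  · right
    push Not at hplus
    obtain ⟨i', hi', hne⟩ := hplus
    have hai' := (eq_or_eq_add_one h i').resolve_left hne
    funext k
    by_cases hk : shiftIter (intAddr a) (k + 1) = intAddr a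
    · rw [itinMinus, itin_intAddr_of_eq hk, entryMinus_bdy,
        eq_add_one_of_shiftIter_eq_of_eq_add_one h hk hi' hai', add_sub_cancel_right]
    · rw [itinMinus, itin_self_of_shiftIter_ne h hk, entryMinus_int]

theorem exists_forall_not_itinPlusApprox {s : Addr} {u : ℕ → ℤ} {p : ℕ} (hp : 0 < p)
    (hper : Function.Periodic u p)
    (hK : ∀ c, 1 ≤ c → (fun k => .int (u (k + c))) ≠ itinPlus s s ∧
      (fun k => .int (u (k + c))) ≠ itinMinus s s) :
    ∃ N, ∀ c, ¬ ItinPlusApprox s (fun k => u (k + c)) N := by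
  have hF : ∀ c, ∃ F, ¬ ItinPlusApprox s (fun k => u (k + (c + p))) F := by
    intro c
    by_contra! hall
    rcases itinPlus_or_itinMinus_self_eq_of_forall_itinPlusApprox hall with h | h
    exacts [(hK (c + p) (by omega)).1 h.symm, (hK (c + p) (by omega)).2 h.symm]
  choose F hF using hF
  refine ⟨(Finset.range p).sup F, fun c hc => hF (c % p) ?_⟩
  have hshift : (fun k => u (k + c)) = fun k => u (k + (c % p + p)) := funext fun k => by
    rw [← hper.map_mod_nat (k + c), ← hper.map_mod_nat (k + (c % p + p)), ← add_assoc,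
      Nat.add_mod_right, Nat.add_mod_mod]
  rw [hshift] at hc
  exact hc.mono (Finset.le_sup (Finset.mem_range.2 (Nat.mod_lt c hp)))

lemma itin_intAddr_shift_eq {s : Addr} {w γ : ℕ → ℤ}
    (hγ : itin s (intAddr γ) = fun k => .int (w k)) (c : ℕ) :
    itin s (intAddr fun j => γ (j + c)) = fun k => .int (w (k + c)) :=
  funext fun k => by rw [← shiftIter_intAddr, itin_shiftIter, hγ]

lemma exists_lt_ne_of_itin_eq {s : Addr} {w γ : ℕ → ℤ} {N : ℕ}
    (hN : ¬ ItinPlusApprox s w N)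
    (hγ : itin s (intAddr γ) = fun k => .int (w k)) : ∃ j < N, intAddr γ j ≠ s j := by
  by_contra! h
  exact hN ⟨γ, h, fun i _ => by rw [itinPlus, hγ, entryPlus_int]⟩

open Classical in
lemma eq_add_ite_of_itin_eq {s : Addr} {w γ : ℕ → ℤ}
    (hγ : itin s (intAddr γ) = fun k => .int (w k)) (k : ℕ) :
    γ k = w k + if addrLt (shiftIter (intAddr γ) (k + 1)) s then 1 else 0 := by
  rcases itin_intAddr_eq_int_iff.1 (congrFun hγ k) with ⟨he, hlt⟩ | ⟨he, hlt⟩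
  · rw [if_neg (addrLt_asymm hlt), he, add_zero]
  · rw [if_pos hlt, he]

section Periodicity

variable {s : Addr} {u : ℕ → ℤ} {N : ℕ}
  (hN : ∀ c, ¬ ItinPlusApprox s (fun k => u (k + c)) N)
  {γ : ℕ → ℤ} (hγ : itin s (intAddr γ) = fun k => .int (u k))
include hN hγ

lemma shiftIter_lt_iff_of_eqOn_window {k k' : ℕ}
    (hwin : ∀ e < N, γ (e + (k + 1)) = γ (e + (k' + 1))) :
    addrLt (shiftIter (intAddr γ) (k + 1)) s ↔ addrLt (shiftIter (intAddr γ) (k' + 1)) s :=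
  addrLt_congr_left (fun j hj => by simp only [shiftIter, intAddr, hwin j hj])
    (exists_lt_ne_of_itin_eq (hN (k + 1)) (itin_intAddr_shift_eq hγ (k + 1)))

theorem exists_periodic_of_itin_eq {p : ℕ} (hp : 0 < p) (hper : Function.Periodic u p) :
    ∃ d, 0 < d ∧ Function.Periodic γ d := by
  classical
  have : NeZero p := ⟨hp.ne'⟩
  let b : ℕ → Bool := fun k => decide (addrLt (shiftIter (intAddr γ) (k + 1)) s)
  have hγb : ∀ k, γ k = u k + if b k then 1 else 0 := fun k => by
    simpa [b] using eq_add_ite_of_itin_eq hγ k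
  have hu : ∀ i j : ℕ, (i : ZMod p) = j → u i = u j := fun i j hij => by
    rw [← hper.map_mod_nat i, ← hper.map_mod_nat j, (ZMod.natCast_eq_natCast_iff' i j p).1 hij]
  let state : ℕ → (Fin (N + 1) → Bool) × ZMod p := fun k => (fun e => b (e + k), k)
  have hstate : ∀ k k', state (k + 1) = state (k' + 1) → state k = state k' := by
    intro k k' hkk'
    simp only [state, Prod.mk.injEq, Nat.cast_add, Nat.cast_one] at hkk'
    obtain ⟨hb, hz⟩ := hkk'
    have hb' : ∀ e ≤ N, b (e + (k + 1)) = b (e + (k' + 1)) := fun e he =>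
      congrFun hb ⟨e, by omega⟩
    have hz' : (k : ZMod p) = k' := add_right_cancel hz
    have hwin : ∀ e < N, γ (e + (k + 1)) = γ (e + (k' + 1)) := fun e he => by
      rw [hγb (e + (k + 1)), hγb (e + (k' + 1)), hb' e he.le,
        hu (e + (k + 1)) (e + (k' + 1)) (by push_cast; rw [hz'])]
    refine Prod.ext (funext fun ⟨e, he⟩ => ?_) hz'
    rcases e with _ | e
    · show b (0 + k) = b (0 + k')
      simp only [zero_add, b, decide_eq_decide]
      exact shiftIter_lt_iff_of_eqOn_window hN hγ hwin
    · show b (e + 1 + k) = b (e + 1 + k')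
      rw [add_assoc, add_comm 1 k, add_assoc, add_comm 1 k']
      exact hb' e (by omega)
  obtain ⟨d, hd, hperd⟩ := exists_periodic_of_determines_pred state hstate
  refine ⟨d, hd, fun k => ?_⟩
  have hb0 : b (k + d) = b k := by simpa [state] using congrFun (congrArg Prod.fst (hperd k)) 0
  rw [hγb, hγb k, hb0, hu _ _ (congrArg Prod.snd (hperd k))]

end Periodicity

open Classical in
lemma exists_itinPlus_eq_below (s : Addr) (D : ℕ) (w : ℕ → ℤ) :
    ∃ γ ∈ Set.univ.pi (fun i => Set.Icc (w i) (w i + 1)),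
      ∀ i < D, itinPlus s (intAddr γ) i = .int (w i) := by
  induction D generalizing w with
  | zero => exact ⟨w, fun i _ => ⟨le_rfl, by omega⟩, fun i hi => absurd hi i.not_lt_zero⟩
  | succ D ih =>
    obtain ⟨γ, hγI, hγ⟩ := ih fun i => w (i + 1)
    let γ' : ℕ → ℤ := fun i =>
      if i = 0 then w 0 + if addrLt (intAddr γ) s then 1 else 0 else γ (i - 1)
    have hshift : shiftIter (intAddr γ') 1 = intAddr γ := rfl
    refine ⟨γ', fun i _ => ?_, fun i hi => ?_⟩ <;> rcases i with _ | i
    · simp only [γ', if_true, Set.mem_Icc]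
      split_ifs <;> omega
    · exact hγI i trivial
    · rw [itinPlus_intAddr_eq_int_iff, zero_add, hshift]
      by_cases h : addrLt (intAddr γ) s <;> simp [γ', h]
    · rw [← itinPlus_shiftIter, hshift]
      exact hγ i (by omega)

open Filter Topology in
theorem exists_itin_eq {s : Addr} {w : ℕ → ℤ}
    (hw : ∀ c, ¬ ∀ F, ItinPlusApprox s (fun k => w (k + c)) F) :
    ∃ γ, itin s (intAddr γ) = fun k => .int (w k) := by
  choose approx happroxI happrox using fun D => exists_itinPlus_eq_below s D w
  obtain ⟨γ, -, hγ⟩ := (isCompact_univ_pi fun i => isCompact_Icc).exists_mapClusterPt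
    (f := atTop) (tendsto_principal.2 (Eventually.of_forall happroxI))
  have hnear : ∀ n D₀, ∃ D ≥ D₀, ∀ j < n, approx D j = γ j := by
    intro n D₀
    have hnhds : Set.pi (Set.Iio n) (fun j => {γ j}) ∈ 𝓝 γ :=
      (isOpen_set_pi (Set.finite_Iio n) fun _ _ => isOpen_discrete _).mem_nhds (by simp)
    simpa using frequently_atTop.1 (mapClusterPt_iff_frequently.1 hγ _ hnhds) D₀
  refine ⟨γ, funext fun k => ?_⟩
  have hne : shiftIter (intAddr γ) (k + 1) ≠ s := by
    -- otherwise the shifted approximations would approximate `s` to every depth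
    intro heq
    refine hw (k + 1) fun F => ?_
    obtain ⟨D, hD, hDγ⟩ := hnear (k + 1 + F) (k + 1 + F)
    refine ⟨fun j => approx D (j + (k + 1)), fun j hj => ?_, fun i hi => ?_⟩
    · rw [← heq]
      simp only [shiftIter, intAddr, hDγ _ (by omega : j + (k + 1) < k + 1 + F)]
    · rw [← shiftIter_intAddr, itinPlus_shiftIter]
      exact happrox D _ (by omega)
  obtain ⟨n, hn⟩ := exists_forall_eqOn_itinPlus_eq_itin hne
  obtain ⟨D, hD, hDγ⟩ := hnear n (k + 1)
  rw [← hn _ hDγ]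
  exact happrox D k (by omega)

lemma exists_periodicAddr_of_shiftIter_eq {a : Addr} {d : ℕ} (hd : 0 < d)
    (h : shiftIter a d = a) : ∃ n, PeriodicAddr a n := by
  classical
  have hex : ∃ m, 1 ≤ m ∧ shiftIter a m = a := ⟨d, hd, h⟩
  exact ⟨Nat.find hex, (Nat.find_spec hex).1, (Nat.find_spec hex).2,
    fun m hm hlt hma => Nat.find_min hex hlt ⟨hm, hma⟩⟩

lemma itin_of_shiftIter_eq_topAddr {s r : Addr} {k : ℕ} (h : shiftIter r k = topAddr) :
    itin s r k = .star := by
  rw [itin, if_pos h]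

lemma isExtAddr_of_inSBar {s r : Addr} (hr : InSBar r) (h : ∀ k, itin s r k ≠ .star) :
    IsExtAddr r := by
  rcases hr with (hext | ⟨n, -, hint⟩) | rfl
  · exact hext
  · exact absurd (itin_of_shiftIter_eq_topAddr
      (funext fun j => hint.2.2.2 (j + (n - 1)) (by omega))) (h (n - 1))
  · exact absurd (itin_of_shiftIter_eq_topAddr rfl) (h 0)

theorem stmt4_general (s : Addr) (u : ℕ → ItinEntry)
    (hint : ∀ k, ∃ j : ℤ, u k = ItinEntry.int j)
    (hper : ∃ p, 1 ≤ p ∧ ∀ k, u (k + p) = u k)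
    (hK : ∀ k, 1 ≤ k →
      (fun j => u (j + k)) ≠ itinPlus s s ∧ (fun j => u (j + k)) ≠ itinMinus s s) :
    (∃ r : Addr, IsExtAddr r ∧ (∃ n, PeriodicAddr r n) ∧ itin s r = u) ∧
    (∀ r : Addr, InSBar r → itin s r = u → IsExtAddr r ∧ ∃ n, PeriodicAddr r n) := by
  obtain ⟨p, hp, hup⟩ := hper
  choose v hv using hint
  obtain rfl : u = fun k => .int (v k) := funext hv
  have hvper : Function.Periodic v p := fun k => ItinEntry.int.inj (hup k)
  obtain ⟨N, hN⟩ := exists_forall_not_itinPlusApprox hp hvper hK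
  have hperiodic (γ : ℕ → ℤ) (hγ : itin s (intAddr γ) = fun k => .int (v k)) :
      ∃ n, PeriodicAddr (intAddr γ) n :=
    let ⟨d, hd, hγd⟩ := exists_periodic_of_itin_eq hN hγ hp hvper
    exists_periodicAddr_of_shiftIter_eq hd
      (funext fun j => congrArg (fun m : ℤ => ((m : ℝ) : Entry)) (hγd j))
  refine ⟨?_, fun r hr hitin => ?_⟩
  · obtain ⟨γ, hγ⟩ := exists_itin_eq fun c hall => hN c (hall N)
    exact ⟨intAddr γ, fun k => ⟨γ k, rfl⟩, hperiodic γ hγ, hγ⟩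
  · have hext := isExtAddr_of_inSBar hr fun k hk => by rw [hitin] at hk; cases hk
    choose γ hγ using hext
    obtain rfl : r = intAddr γ := funext hγ
    exact ⟨fun k => ⟨γ k, rfl⟩, hperiodic γ hitin⟩

/-- Let `s ∈ Ṡ` and let `u` be a periodic sequence of integers with
`σ^k(u) ∉ {K⁺(s), K⁻(s)}` for all `k ≥ 1`. Then there is a periodic external address `r`
with `itin_s(r) = u`, and every `r ∈ S̄` with `itin_s(r) = u` is a periodic external
address. -/
theorem stmt4 (s : Addr) (hs : InSDot s) (u : ℕ → ItinEntry)
    (hint : ∀ k, ∃ j : ℤ, u k = ItinEntry.int j)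
    (hper : ∃ p, 1 ≤ p ∧ ∀ k, u (k + p) = u k)
    (hK : ∀ k, 1 ≤ k →
      (fun j => u (j + k)) ≠ itinPlus s s ∧ (fun j => u (j + k)) ≠ itinMinus s s) :
    (∃ r : Addr, IsExtAddr r ∧ (∃ n, PeriodicAddr r n) ∧ itin s r = u) ∧
    (∀ r : Addr, InSBar r → itin s r = u → IsExtAddr r ∧ ∃ n, PeriodicAddr r n) :=
  stmt4_general s u hint hper hK

end
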